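/- Let M be a 3-connected matroid and let e ∈ E(M). Then si(M/e) is not 3-connected if and only if M has a vertical 3-separation (X, {e}, Y). Dually, co(M\e) is not 3-connected if and only if M has a cyclic 3-separation (X, {e}, Y). -/

import Mathlib

open Set Matroid

namespace ElasticPaper

variable {α : Type*}

/-! ### Basic operations: deletion, contraction, minors, isomorphism -/

/-- The deletion `M \ D`. -/
def del (M : Matroid α) (D : Set α) : Matroid α := M ↾ (M.E \ D)

/-- The contraction `M / C`. -/
def con (M : Matroid α) (C : Set α) : Matroid α := (del M✶ C)✶

/-- `N` is a minor of `M`. -/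
def IsMinorOf (N M : Matroid α) : Prop := ∃ C D : Set α, N = del (con M C) D

/-- Isomorphism of matroids (on a common label type). -/
def Iso (M N : Matroid α) : Prop :=
  ∃ f : α → α, Set.BijOn f M.E N.E ∧ ∀ I ⊆ M.E, (M.Indep I ↔ N.Indep (f '' I))

/-- `M` has a minor isomorphic to `N`. -/
def HasMinorIso (M N : Matroid α) : Prop := ∃ N', IsMinorOf N' M ∧ Iso N N'

/-! ### Rank and connectivity -/

/-- The rank of a set, valued in `ℕ∞`. -/
noncomputable def eRk (M : Matroid α) (X : Set α) : ℕ∞ :=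
  ⨆ I ∈ {I : Set α | M.Indep I ∧ I ⊆ X}, I.encard

/-- The rank of a matroid. -/
noncomputable def eRank (M : Matroid α) : ℕ∞ := eRk M M.E

/-- `X` is `k`-separating in `M`, i.e. `λ(X) ≤ k - 1`. -/
def KSeparating (M : Matroid α) (k : ℕ) (X : Set α) : Prop :=
  eRk M X + eRk M (M.E \ X) + 1 ≤ eRank M + (k : ℕ∞)

/-- `X` is exactly `k`-separating in `M`, i.e. `λ(X) = k - 1`. -/
def ExactlyKSeparating (M : Matroid α) (k : ℕ) (X : Set α) : Prop :=
  eRk M X + eRk M (M.E \ X) + 1 = eRank M + (k : ℕ∞)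

/-- `(X, Y)` is a `k`-separation of `M`. -/
def KSeparation (M : Matroid α) (k : ℕ) (X Y : Set α) : Prop :=
  Disjoint X Y ∧ X ∪ Y = M.E ∧ KSeparating M k X ∧
    (k : ℕ∞) ≤ X.encard ∧ (k : ℕ∞) ≤ Y.encard

/-- `M` is `n`-connected: it has no `k`-separations for `k < n`. -/
def NConnected (M : Matroid α) (n : ℕ) : Prop :=
  ∀ k X Y, k < n → ¬ KSeparation M k X Y

/-- `M` is `3`-connected. -/
abbrev ThreeConnected (M : Matroid α) : Prop := NConnected M 3

/-- `(X, Y)` is a vertical `k`-separation of `M`. -/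
def VerticalKSeparation (M : Matroid α) (k : ℕ) (X Y : Set α) : Prop :=
  KSeparation M k X Y ∧ (k : ℕ∞) ≤ eRk M X ∧ (k : ℕ∞) ≤ eRk M Y

/-- `(X, {e}, Y)` is a vertical `3`-separation of `M`. -/
def Vertical3Sep (M : Matroid α) (X : Set α) (e : α) (Y : Set α) : Prop :=
  e ∉ X ∧ e ∉ Y ∧ Disjoint X Y ∧ X ∪ {e} ∪ Y = M.E ∧
  VerticalKSeparation M 3 (X ∪ {e}) Y ∧ VerticalKSeparation M 3 X (Y ∪ {e}) ∧
  e ∈ M.closure X ∧ e ∈ M.closure Y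

/-- `(X, {e}, Y)` is a cyclic `3`-separation of `M`. -/
def Cyclic3Sep (M : Matroid α) (X : Set α) (e : α) (Y : Set α) : Prop :=
  Vertical3Sep M✶ X e Y

/-- `Y ∪ {e}` is maximal among vertical 3-separations of `M`. -/
def VertMaximal (M : Matroid α) (e : α) (Y : Set α) : Prop :=
  ∀ X' : Set α, ∀ e' : α, ∀ Y' : Set α,
    Vertical3Sep M X' e' Y' → ¬ (Y ∪ {e} ⊂ Y' ∪ {e'})

/-! ### Circuits, fans -/

/-- A circuit is a minimal dependent set. -/
def Circuit (M : Matroid α) (C : Set α) : Prop := M.Dep C ∧ ∀ D, D ⊂ C → M.Indep D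

/-- A triangle is a 3-element circuit. -/
def Triangle (M : Matroid α) (T : Set α) : Prop := Circuit M T ∧ T.encard = 3

/-- A triad is a 3-element cocircuit. -/
def Triad (M : Matroid α) (T : Set α) : Prop := Circuit M✶ T ∧ T.encard = 3

/-- `f 0, f 1, …, f (k-1)` is a fan ordering in `M`. -/
def FanOrdering (M : Matroid α) (k : ℕ) (f : ℕ → α) : Prop :=
  3 ≤ k ∧ Set.InjOn f (Set.Iio k) ∧ (∀ i < k, f i ∈ M.E) ∧
  (∀ i, i + 2 < k →
    (Triangle M {f i, f (i+1), f (i+2)} ∨ Triad M {f i, f (i+1), f (i+2)})) ∧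
  (∀ i, i + 3 < k →
    (Triangle M {f i, f (i+1), f (i+2)} → Triad M {f (i+1), f (i+2), f (i+3)}) ∧
    (Triad M {f i, f (i+1), f (i+2)} → Triangle M {f (i+1), f (i+2), f (i+3)}))

/-- `F` is a fan of `M`. -/
def IsFan (M : Matroid α) (F : Set α) : Prop :=
  ∃ k f, FanOrdering M k f ∧ F = f '' (Set.Iio k)

/-- `M` has no 4-element fans. -/
def NoFourElementFan (M : Matroid α) : Prop := ¬ ∃ F, IsFan M F ∧ F.encard = 4

/-- A convenient ordering function for a 4-element fan. -/
def quad (a b c d : α) : ℕ → α :=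
  fun i => if i = 0 then a else if i = 1 then b else if i = 2 then c else d

/-! ### Simplification and cosimplification -/

/-- `e` is a nonloop of `M`. -/
def Nonloop (M : Matroid α) (e : α) : Prop := M.Indep {e}

/-- `S` is a simplification of `M`: the restriction of `M` to a transversal of the
parallel classes of `M`. -/
def IsSimplificationOf (S M : Matroid α) : Prop :=
  ∃ X : Set α, (∀ x ∈ X, Nonloop M x) ∧
    (∀ e, Nonloop M e → ∃! x, x ∈ X ∧ M.closure {x} = M.closure {e}) ∧
    S = M ↾ X

/-- `S` is a cosimplification of `M`. -/
def IsCosimplificationOf (S M : Matroid α) : Prop := IsSimplificationOf S✶ M✶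

/-- `si M` is 3-connected. -/
def SiConn3 (M : Matroid α) : Prop := ∀ S, IsSimplificationOf S M → ThreeConnected S

/-- `co M` is 3-connected. -/
def CoConn3 (M : Matroid α) : Prop := ∀ S, IsCosimplificationOf S M → ThreeConnected S

/-- `si M` has an `N`-minor. -/
def SiHasMinor (M N : Matroid α) : Prop := ∀ S, IsSimplificationOf S M → HasMinorIso S N

/-- `co M` has an `N`-minor. -/
def CoHasMinor (M N : Matroid α) : Prop := ∀ S, IsCosimplificationOf S M → HasMinorIso S N

/-! ### Elastic, N-elastic, N-revealing elements -/

/-- `e` is an elastic element of `M`. -/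
def Elastic (M : Matroid α) (e : α) : Prop :=
  e ∈ M.E ∧ SiConn3 (con M {e}) ∧ CoConn3 (del M {e})

/-- `e` is an `N`-elastic element of `M`. -/
def NElastic (M N : Matroid α) (e : α) : Prop :=
  Elastic M e ∧ SiHasMinor (con M {e}) N ∧ CoHasMinor (del M {e}) N

/-- `e` is an `N`-revealing element of `M`. -/
def NRevealing (M N : Matroid α) (e : α) : Prop :=
  e ∈ M.E ∧
    ((SiHasMinor (con M {e}) N ∧ ¬ SiConn3 (con M {e})) ∨
     (CoHasMinor (del M {e}) N ∧ ¬ CoConn3 (del M {e})))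

/-! ### Theta matroids and Theta-separators -/

/-- `M` is (isomorphic to) `Θ_n` or `Θ_n⁻`, with segment elements `W` and cosegment
elements `Z` (so `n = |Z|`). This is expressed by listing the circuits. -/
def ThetaParts (M : Matroid α) (W Z : Set α) : Prop :=
  M.E = W ∪ Z ∧ Disjoint W Z ∧ W.Finite ∧ Z.Finite ∧
  (W.ncard = Z.ncard ∨ W.ncard + 1 = Z.ncard) ∧
  ∃ f : α → α, Set.InjOn f W ∧ f '' W ⊆ Z ∧
    ∀ C, Circuit M C ↔
      ((C ⊆ W ∧ C.encard = 3) ∨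
       (∃ w ∈ W, C = insert w (Z \ {f w})) ∨
       (∃ w ∈ W, ∃ w' ∈ W, ∃ z ∈ Z, w ≠ w' ∧ z ≠ f w ∧ z ≠ f w' ∧
         C = insert w (insert w' (Z \ {z}))))

/-- `W ∪ Z` is a Θ-separator of `M`, where `W` is a rank-2 subset and `Z` a corank-2
subset of `E(M)`. -/
def ThetaSeparatorParts (M : Matroid α) (W Z : Set α) : Prop :=
  W ⊆ M.E ∧ Z ⊆ M.E ∧ 4 ≤ eRank M ∧ 4 ≤ eRank M✶ ∧
  eRk M W = 2 ∧ eRk M✶ Z = 2 ∧ 3 ≤ max W.ncard Z.ncard ∧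
  (ThetaParts (M ↾ (W ∪ Z)) W Z ∨ ThetaParts (M✶ ↾ (W ∪ Z)) Z W)

/-- `S` is a Θ-separator of `M`. -/
def ThetaSeparator (M : Matroid α) (S : Set α) : Prop :=
  ∃ W Z : Set α, S = W ∪ Z ∧ ThetaSeparatorParts M W Z

/-- `S` is a Θ-separator of `M` revealing the minor `N`. -/
def ThetaSeparatorRevealing (M N : Matroid α) (S : Set α) : Prop :=
  ∃ W Z : Set α, S = W ∪ Z ∧ W ⊆ M.E ∧ Z ⊆ M.E ∧ 4 ≤ eRank M ∧ 4 ≤ eRank M✶ ∧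
    eRk M W = 2 ∧ eRk M✶ Z = 2 ∧ 3 ≤ max W.ncard Z.ncard ∧
    ((ThetaParts (M ↾ (W ∪ Z)) W Z ∧ ∃ z ∈ Z, NRevealing M N z) ∨
     (ThetaParts (M✶ ↾ (W ∪ Z)) Z W ∧ ∃ w ∈ W, NRevealing M✶ N✶ w))

/-! ### Paths of 3-separations, path-width, sequential separations -/

/-- `M` has path-width three. -/
def PathWidthThree (M : Matroid α) : Prop :=
  ∃ (k : ℕ) (f : ℕ → α), Set.InjOn f (Set.Iio k) ∧ f '' (Set.Iio k) = M.E ∧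
    ∀ i ≤ k, KSeparating M 3 (f '' Set.Iio i)

/-- `(X, Y)` is a sequential 3-separation of `M`. -/
def SequentialThreeSeparation (M : Matroid α) (X Y : Set α) : Prop :=
  Disjoint X Y ∧ X ∪ Y = M.E ∧ ExactlyKSeparating M 3 X ∧
  ∃ U, (U = X ∨ U = Y) ∧ ∃ (k : ℕ) (f : ℕ → α), Set.InjOn f (Set.Iio k) ∧
    f '' (Set.Iio k) = U ∧ ∀ i ≤ k, KSeparating M 3 (f '' Set.Iio i)

/-! ### Flowers and M(K₄) -/

/-- `(P₁, P₂, P₃, P₄)` is a swirl-like flower of `M` with four petals. -/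
def SwirlLikeFlower4 (M : Matroid α) (P₁ P₂ P₃ P₄ : Set α) : Prop :=
  Disjoint P₁ P₂ ∧ Disjoint P₁ P₃ ∧ Disjoint P₁ P₄ ∧
  Disjoint P₂ P₃ ∧ Disjoint P₂ P₄ ∧ Disjoint P₃ P₄ ∧
  P₁ ∪ P₂ ∪ P₃ ∪ P₄ = M.E ∧
  2 ≤ P₁.encard ∧ 2 ≤ P₂.encard ∧ 2 ≤ P₃.encard ∧ 2 ≤ P₄.encard ∧
  KSeparating M 3 P₁ ∧ KSeparating M 3 P₂ ∧ KSeparating M 3 P₃ ∧ KSeparating M 3 P₄ ∧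
  KSeparating M 3 (P₁ ∪ P₂) ∧ KSeparating M 3 (P₂ ∪ P₃) ∧
  KSeparating M 3 (P₃ ∪ P₄) ∧ KSeparating M 3 (P₄ ∪ P₁) ∧
  eRk M P₁ + eRk M P₂ = eRk M (P₁ ∪ P₂) + 1 ∧
  eRk M P₂ + eRk M P₃ = eRk M (P₂ ∪ P₃) + 1 ∧
  eRk M P₃ + eRk M P₄ = eRk M (P₃ ∪ P₄) + 1 ∧
  eRk M P₄ + eRk M P₁ = eRk M (P₄ ∪ P₁) + 1 ∧
  eRk M P₁ + eRk M P₃ = eRk M (P₁ ∪ P₃) ∧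
  eRk M P₂ + eRk M P₄ = eRk M (P₂ ∪ P₄)

/-- `Q` is isomorphic to the cycle matroid `M(K₄)`. -/
def IsMK4 (Q : Matroid α) : Prop :=
  ∃ p q r s t u : α, ([p, q, r, s, t, u] : List α).Nodup ∧
    Q.E = {p, q, r, s, t, u} ∧
    ∀ C, Circuit Q C ↔
      C ∈ ({{p, q, s}, {p, r, t}, {q, r, u}, {s, t, u},
            {p, s, u, r}, {p, t, u, q}, {q, s, t, r}} : Set (Set α))

/-- `N` is isomorphic to the uniform matroid `U_{r,n}`. -/
def IsUnif (N : Matroid α) (r n : ℕ) : Prop :=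
  N.E.encard = (n : ℕ∞) ∧ ∀ I, N.Indep I ↔ I ⊆ N.E ∧ I.encard ≤ (r : ℕ∞)

/-! ### Fixed-basis notions -/

/-- `e` is removable with respect to the basis `B`. -/
def RemovableWrt (M : Matroid α) (B : Set α) (e : α) : Prop :=
  (e ∈ B ∧ SiConn3 (con M {e})) ∨ (e ∈ M.E \ B ∧ CoConn3 (del M {e}))

/-- `e` is `(N, B)`-robust. -/
def NBRobust (M N : Matroid α) (B : Set α) (e : α) : Prop :=
  (e ∈ B ∧ HasMinorIso (con M {e}) N) ∨ (e ∈ M.E \ B ∧ HasMinorIso (del M {e}) N)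

/-- `e` is `(N, B)`-strong. -/
def NBStrong (M N : Matroid α) (B : Set α) (e : α) : Prop :=
  (e ∈ B ∧ SiConn3 (con M {e}) ∧ SiHasMinor (con M {e}) N) ∨
  (e ∈ M.E \ B ∧ CoConn3 (del M {e}) ∧ CoHasMinor (del M {e}) N)

/-!
Write `N = M ／ {e}`. Contracting a nonloop `e` lowers the rank of every set `Z ∌ e` spanning
`e`, and of `M` itself, by exactly one; hence for a partition `(X, Y)` of `E - e` with
`e ∈ cl(Y)`, `(X, Y)` is a vertical `k`-separation of `N` if and only if `(X ∪ e, Y)` is a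
vertical `(k + 1)`-separation of `M`.

The simplification `si N` is `3`-connected if and only if `N` has no vertical `k`-separation
with `k < 3`: a separation of `si N` spreads to one of `N` by adding to each side the parallel
classes it meets, and a vertical separation `(X, Y)` of `N` cuts `si N` into the representatives
spanned by `X` and the rest.

If `(X, Y)` is a vertical `k`-separation of `N` with `e ∉ cl(X)`, then `(X, Y ∪ e)` is a
`k`-separation of `M`. So when `M` is `3`-connected, `e` is spanned by both sides,
`(X ∪ e, Y)` is a `(k + 1)`-separation of `M`, and `k = 2`. The statement about `co(M ＼ e)`
is the dual one, since `co(M ＼ e)` is dual to `si(M✶ ／ e)` and `3`-connectivity is invariant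
under duality.
-/

variable {M N S : Matroid α} {X Y U T : Set α} {e x : α} {k : ℕ}

lemma _root_.Matroid.eRk_ne_top [M.RankFinite] : M.eRk X ≠ ⊤ :=
  M.eRk_ne_top_iff.2 (M.isRkFinite_set X)

lemma _root_.Matroid.eRank_ne_top [M.RankFinite] : M.eRank ≠ ⊤ :=
  M.eRank_ne_top_iff.2 inferInstance

lemma _root_.Matroid.eRk_le_of_subset_closure (h : X ⊆ M.closure Y) : M.eRk X ≤ M.eRk Y :=
  (M.eRk_mono h).trans_eq (M.eRk_closure_eq Y)

lemma eRk_eq_eRk (M : Matroid α) (X : Set α) : eRk M X = M.eRk X := by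
  refine le_antisymm (iSup₂_le fun I hI ↦ hI.1.encard_le_eRk_of_subset hI.2) ?_
  obtain ⟨I, hI⟩ := M.exists_isBasis' X
  rw [← hI.encard_eq_eRk]
  exact le_iSup₂ (f := fun I (_ : I ∈ {I : Set α | M.Indep I ∧ I ⊆ X}) ↦ I.encard) I
    ⟨hI.indep, hI.subset⟩

lemma eRank_eq_eRank (M : Matroid α) : eRank M = M.eRank := by
  rw [eRank, eRk_eq_eRk, eRk_ground]

lemma del_eq_delete (M : Matroid α) (D : Set α) : del M D = M ＼ D := rfl

lemma kSeparating_iff : KSeparating M k X ↔ M.eRk X + M.eRk (M.E \ X) + 1 ≤ M.eRank + k := by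
  rw [KSeparating, eRk_eq_eRk, eRk_eq_eRk, eRank_eq_eRank]

lemma kSeparating_iff_of_partition (hXY : Disjoint X Y) (hE : X ∪ Y = M.E) :
    KSeparating M k X ↔ M.eRk X + M.eRk Y + 1 ≤ M.eRank + k := by
  rw [kSeparating_iff, ← hE, union_sdiff_cancel_left hXY.inter_eq.subset]

lemma not_kSeparating_zero [M.RankFinite] : ¬ KSeparating M 0 X := by
  rw [kSeparating_iff, Nat.cast_zero, add_zero]
  intro h
  have hle := M.eRk_union_le_eRk_add_eRk X (M.E \ X)
  rw [union_sdiff_self, eRk_union_ground] at hle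
  lift M.eRk X to ℕ using eRk_ne_top with a
  lift M.eRk (M.E \ X) to ℕ using eRk_ne_top with b
  lift M.eRank to ℕ using eRank_ne_top with r
  norm_cast at h hle
  omega

lemma KSeparation.symm (h : KSeparation M k X Y) : KSeparation M k Y X := by
  obtain ⟨hXY, hE, hsep, hX, hY⟩ := h
  refine ⟨hXY.symm, by rwa [union_comm], ?_, hY, hX⟩
  rw [kSeparating_iff_of_partition hXY hE] at hsep
  rwa [kSeparating_iff_of_partition hXY.symm (by rwa [union_comm]), add_comm (M.eRk Y)]

lemma KSeparation.nonempty_left [M.RankFinite] (h : KSeparation M k X Y) : X.Nonempty := by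
  obtain ⟨-, -, hsep, hkX, -⟩ := h
  obtain rfl | hk := eq_or_ne k 0
  · exact absurd hsep not_kSeparating_zero
  rw [← one_le_encard_iff_nonempty]
  exact le_trans (by exact_mod_cast Nat.one_le_iff_ne_zero.2 hk) hkX

lemma VerticalKSeparation.symm (h : VerticalKSeparation M k X Y) :
    VerticalKSeparation M k Y X :=
  ⟨h.1.symm, h.2.2, h.2.1⟩

lemma verticalKSeparation_iff_of_partition (hXY : Disjoint X Y) (hE : X ∪ Y = M.E) :
    VerticalKSeparation M k X Y ↔
      M.eRk X + M.eRk Y + 1 ≤ M.eRank + k ∧ k ≤ M.eRk X ∧ k ≤ M.eRk Y := by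
  rw [VerticalKSeparation, KSeparation, kSeparating_iff_of_partition hXY hE, eRk_eq_eRk,
    eRk_eq_eRk]
  exact ⟨fun ⟨⟨_, _, h, _⟩, hX, hY⟩ ↦ ⟨h, hX, hY⟩, fun ⟨h, hX, hY⟩ ↦
    ⟨⟨hXY, hE, h, hX.trans (M.eRk_le_encard X), hY.trans (M.eRk_le_encard Y)⟩, hX, hY⟩⟩

structure IsParallelTransversal (N : Matroid α) (T : Set α) : Prop where
  nonloop : ∀ x ∈ T, Nonloop N x
  existsUnique : ∀ e, Nonloop N e → ∃! x, x ∈ T ∧ N.closure {x} = N.closure {e}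

lemma isSimplificationOf_iff :
    IsSimplificationOf S N ↔ ∃ T, IsParallelTransversal N T ∧ S = N ↾ T :=
  ⟨fun ⟨T, h₁, h₂, h⟩ ↦ ⟨T, ⟨h₁, h₂⟩, h⟩,
    fun ⟨T, ⟨h₁, h₂⟩, h⟩ ↦ ⟨T, h₁, h₂, h⟩⟩

lemma exists_isSimplificationOf (N : Matroid α) : ∃ S, IsSimplificationOf S N := by
  let rep (c : {c : Set α // ∃ x, Nonloop N x ∧ N.closure {x} = c}) : α := c.2.choose
  have hrep c : Nonloop N (rep c) ∧ N.closure {rep c} = c := c.2.choose_spec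
  refine ⟨_, isSimplificationOf_iff.2 ⟨range rep, ⟨?_, fun e he ↦ ?_⟩, rfl⟩⟩
  · rintro _ ⟨c, rfl⟩
    exact (hrep c).1
  refine ⟨rep ⟨_, e, he, rfl⟩, ⟨mem_range_self _, (hrep _).2⟩, ?_⟩
  rintro _ ⟨⟨c, rfl⟩, hc⟩
  have hce : c = ⟨_, e, he, rfl⟩ := Subtype.ext ((hrep c).2.symm.trans hc)
  rw [hce]

namespace IsParallelTransversal

lemma subset_ground (hT : IsParallelTransversal N T) : T ⊆ N.E :=
  fun x hx ↦ (hT.nonloop x hx).subset_ground rfl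

lemma mem_closure_inter_closure_singleton (hT : IsParallelTransversal N T) (hx : x ∈ N.E) :
    x ∈ N.closure (T ∩ N.closure {x}) := by
  by_cases hnl : N.IsNonloop x
  · obtain ⟨t, ⟨htT, htx⟩, -⟩ := hT.existsUnique x hnl.indep
    have ht : t ∈ T ∩ N.closure {x} :=
      ⟨htT, htx ▸ N.mem_closure_self t (hT.subset_ground htT)⟩
    exact N.closure_subset_closure (singleton_subset_iff.2 ht) (htx ▸ N.mem_closure_self x)
  · exact ((not_isNonloop_iff hx).1 hnl).mem_closure _

lemma ground_subset_closure (hT : IsParallelTransversal N T) : N.E ⊆ N.closure T := fun _ hx ↦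
  N.closure_subset_closure inter_subset_left (hT.mem_closure_inter_closure_singleton hx)

lemma eRank_restrict (hT : IsParallelTransversal N T) : (N ↾ T).eRank = N.eRank :=
  (N.eRk_le_eRank T).antisymm <| by
    rw [← eRk_ground]
    exact eRk_le_of_subset_closure hT.ground_subset_closure

lemma eq_of_mem_closure_singleton (hT : IsParallelTransversal N T) {a b : α} (ha : a ∈ T)
    (hb : b ∈ T) (hab : a ∈ N.closure {b}) : a = b :=
  (hT.existsUnique b (hT.nonloop b hb)).unique
    ⟨ha, (hT.nonloop a ha).isNonloop.closure_eq_of_mem_closure hab⟩ ⟨hb, rfl⟩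

lemma indep_pair (hT : IsParallelTransversal N T) {a b : α} (ha : a ∈ T) (hb : b ∈ T) :
    N.Indep {a, b} := by
  obtain rfl | hab := eq_or_ne a b
  · rw [pair_eq_singleton]
    exact hT.nonloop a ha
  rw [(hT.nonloop b hb).insert_indep_iff_of_notMem hab]
  exact ⟨hT.subset_ground ha, fun h ↦ hab (hT.eq_of_mem_closure_singleton ha hb h)⟩

lemma le_eRk_of_le_two (hT : IsParallelTransversal N T) {n : ℕ∞} {W : Set α} (hW : W ⊆ T)
    (hn : n ≤ 2) (hnW : n ≤ W.encard) : n ≤ N.eRk W := by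
  obtain ⟨I, hIW, rfl⟩ := exists_subset_encard_eq hnW
  refine Indep.encard_le_eRk_of_subset ?_ hIW
  obtain hlt | heq := hn.lt_or_eq
  · obtain rfl | ⟨a, rfl⟩ := encard_le_one_iff_eq.1 (Order.le_of_lt_add_one hlt)
    · exact N.empty_indep
    · exact hT.nonloop a (hW (hIW rfl))
  · obtain ⟨a, b, -, rfl⟩ := encard_eq_two.1 heq
    exact hT.indep_pair (hW (hIW (mem_insert a _))) (hW (hIW (mem_insert_of_mem a rfl)))

end IsParallelTransversal

lemma kSeparating_dual_iff [M.Finite] (hX : X ⊆ M.E) :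
    KSeparating M✶ k X ↔ KSeparating M k X := by
  have hdX := M.eRk_dual_add_eRank X hX
  have hdX' := M.eRk_dual_add_eRank (M.E \ X) sdiff_subset
  have hdE := M.eRank_add_eRank_dual
  have hcard := encard_sdiff_add_encard_of_subset hX
  rw [sdiff_sdiff_cancel_left hX] at hdX'
  rw [kSeparating_iff, kSeparating_iff, dual_ground]
  have hfin {Z : Set α} (hZ : Z ⊆ M.E) : Z.encard ≠ ⊤ :=
    (M.ground_finite.subset hZ).encard_lt_top.ne
  lift M✶.eRk X to ℕ using eRk_ne_top with a'
  lift M✶.eRk (M.E \ X) to ℕ using eRk_ne_top with b'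
  lift M✶.eRank to ℕ using eRank_ne_top with r'
  lift M.eRk X to ℕ using eRk_ne_top with a
  lift M.eRk (M.E \ X) to ℕ using eRk_ne_top with b
  lift M.eRank to ℕ using eRank_ne_top with r
  lift X.encard to ℕ using hfin hX with x
  lift (M.E \ X).encard to ℕ using hfin sdiff_subset with y
  lift M.E.encard to ℕ using hfin subset_rfl with n
  norm_cast at *
  omega

lemma NConnected.dual [M.Finite] {n : ℕ} (h : NConnected M n) : NConnected M✶ n := by
  rintro k X Y hk ⟨hXY, hE, hsep, hX, hY⟩
  have hXE : X ⊆ M.E := hE ▸ subset_union_left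
  exact h k X Y hk ⟨hXY, hE, (kSeparating_dual_iff hXE).1 hsep, hX, hY⟩

lemma threeConnected_dual_iff [M.Finite] : ThreeConnected M✶ ↔ ThreeConnected M :=
  ⟨fun h ↦ M.dual_dual ▸ h.dual, NConnected.dual⟩

lemma IsSimplificationOf.finite [N.Finite] (hS : IsSimplificationOf S N) : S.Finite := by
  obtain ⟨T, hT, rfl⟩ := isSimplificationOf_iff.1 hS
  exact restrict_finite (N.ground_finite.subset hT.subset_ground)

lemma coConn3_iff_siConn3_dual [N.Finite] : CoConn3 N ↔ SiConn3 N✶ := by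
  refine ⟨fun h S hS ↦ ?_, fun h S hS ↦ ?_⟩
  · have := hS.finite
    rw [← threeConnected_dual_iff]
    exact h S✶ (by rwa [IsCosimplificationOf, dual_dual])
  · have : S.Finite := ⟨hS.finite.ground_finite⟩
    exact threeConnected_dual_iff.1 (h S✶ hS)

lemma not_threeConnected_of_kSeparating (hk : k < 3) (hU : KSeparating S k U) (hUE : U ⊆ S.E)
    (hUk : (k : ℕ∞) ≤ U.encard) (hV : (S.E \ U).Nonempty)
    (hcl : Disjoint (S.E \ U) (S.closure U)) : ¬ ThreeConnected S := by
  intro h3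
  by_cases hVk : (k : ℕ∞) ≤ (S.E \ U).encard
  · exact h3 k U _ hk ⟨disjoint_sdiff_right, union_sdiff_cancel hUE, hU, hUk, hVk⟩
  -- otherwise `S.E \ U` is a single element outside the closure of `U`,
  -- and `U` is even 1-separating
  have h1 : 1 ≤ (S.E \ U).encard := one_le_encard_iff_nonempty.2 hV
  have h2 : (S.E \ U).encard < k := lt_of_not_ge hVk
  lift (S.E \ U).encard to ℕ using h2.ne_top with n hn
  norm_cast at h1 h2
  obtain ⟨v, hv⟩ : ∃ v, S.E \ U = {v} := encard_eq_one.1 (by rw [← hn]; norm_cast; omega)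
  have hvU : v ∈ S.E \ U := hv ▸ rfl
  have hvE : v ∈ S.E \ S.closure U := ⟨hvU.1, disjoint_left.1 hcl hvU⟩
  have hrank : S.eRank = S.eRk U + 1 := by
    rw [← eRk_insert_eq_add_one hvE, ← union_singleton, ← hv, union_sdiff_cancel hUE,
      eRk_ground]
  refine h3 1 U {v} (by norm_num)
    ⟨hv ▸ disjoint_sdiff_right, hv ▸ union_sdiff_cancel hUE, ?_, ?_, ?_⟩
  · rw [kSeparating_iff, hv, hrank, Nat.cast_one]
    gcongr
    exact S.eRk_singleton_le v
  · exact le_trans (by exact_mod_cast (by omega : 1 ≤ k)) hUk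
  · simp

lemma IsSimplificationOf.not_threeConnected_of_verticalKSeparation [N.RankFinite]
    (hS : IsSimplificationOf S N) (hk : k < 3) (h : VerticalKSeparation N k X Y) :
    ¬ ThreeConnected S := by
  obtain ⟨T, hT, rfl⟩ := isSimplificationOf_iff.1 hS
  obtain ⟨⟨hXY, hE, hsep, -, -⟩, hkX, hkY⟩ := h
  rw [eRk_eq_eRk] at hkX hkY
  rw [kSeparating_iff_of_partition hXY hE] at hsep
  have hTE := hT.subset_ground
  set U := T ∩ N.closure X
  have hUX : N.eRk U = N.eRk X := by
    refine le_antisymm (eRk_le_of_subset_closure inter_subset_right)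
      (eRk_le_of_subset_closure fun x hx ↦ N.closure_subset_closure ?_
        (hT.mem_closure_inter_closure_singleton (hE ▸ mem_union_left Y hx)))
    exact inter_subset_inter_right T (N.closure_subset_closure (singleton_subset_iff.2 hx))
  have hVY : T \ U ⊆ Y := fun t ⟨htT, htU⟩ ↦ (hE ▸ hTE htT : t ∈ X ∪ Y).resolve_left
    fun htX ↦ htU ⟨htT, N.subset_closure X (hE ▸ subset_union_left) htX⟩
  refine not_threeConnected_of_kSeparating hk ?_ inter_subset_left
    (hkX.trans (hUX.symm.le.trans (N.eRk_le_encard U))) ?_ ?_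
  · rw [kSeparating_iff, restrict_ground_eq, restrict_eRk_eq _ inter_subset_left,
      restrict_eRk_eq _ sdiff_subset, hT.eRank_restrict, hUX]
    calc N.eRk X + N.eRk (T \ U) + 1 ≤ N.eRk X + N.eRk Y + 1 := by gcongr; exact N.eRk_mono hVY
      _ ≤ N.eRank + k := hsep
  · by_contra hV
    rw [not_nonempty_iff_eq_empty, restrict_ground_eq, sdiff_eq_empty] at hV
    have hr : N.eRank ≤ N.eRk X := by
      rw [← eRk_ground]
      exact eRk_le_of_subset_closure (hT.ground_subset_closure.trans
        (N.closure_subset_closure_of_subset_closure (hV.trans inter_subset_right)))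
    lift N.eRk X to ℕ using eRk_ne_top with a
    lift N.eRk Y to ℕ using eRk_ne_top with b
    lift N.eRank to ℕ using eRank_ne_top with r
    norm_cast at hr hsep hkY
    omega
  · rw [restrict_ground_eq, restrict_closure_eq _ inter_subset_left hTE]
    exact disjoint_left.2 fun t ht ht' ↦
      ht.2 ⟨ht.1, N.closure_subset_closure_of_subset_closure inter_subset_right ht'.1⟩

lemma IsSimplificationOf.exists_verticalKSeparation (hS : IsSimplificationOf S N)
    (h : ¬ ThreeConnected S) : ∃ k < 3, ∃ X Y, VerticalKSeparation N k X Y := by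
  obtain ⟨T, hT, rfl⟩ := isSimplificationOf_iff.1 hS
  simp only [NConnected, not_forall, not_not] at h
  obtain ⟨k, U, V, hk, hUV, hE, hsep, hUk, hVk⟩ := h
  rw [kSeparating_iff_of_partition hUV hE] at hsep
  rw [restrict_ground_eq] at hE
  have hUT : U ⊆ T := hE ▸ subset_union_left
  have hVT : V ⊆ T := hE ▸ subset_union_right
  have hTE := hT.subset_ground
  rw [restrict_eRk_eq _ hUT, restrict_eRk_eq _ hVT, hT.eRank_restrict] at hsep
  set Y := ⋃ v ∈ V, N.closure {v}
  have hYE : Y ⊆ N.E := iUnion₂_subset fun v _ ↦ N.closure_subset_ground _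
  have hVY : V ⊆ Y := fun v hv ↦ mem_iUnion₂_of_mem hv (N.mem_closure_self v (hTE (hVT hv)))
  have hYV : Y ⊆ N.closure V :=
    iUnion₂_subset fun v hv ↦ N.closure_subset_closure (singleton_subset_iff.2 hv)
  have hUX : U ⊆ N.E \ Y := by
    refine fun u hu ↦ ⟨hTE (hUT hu), ?_⟩
    simp only [Y, mem_iUnion₂]
    rintro ⟨v, hv, huv⟩
    exact disjoint_left.1 hUV hu (hT.eq_of_mem_closure_singleton (hUT hu) (hVT hv) huv ▸ hv)
  have hXU : N.E \ Y ⊆ N.closure U := by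
    rintro x ⟨hx, hxY⟩
    refine N.closure_subset_closure (fun t ht ↦ ?_) (hT.mem_closure_inter_closure_singleton hx)
    obtain ⟨htT, htx⟩ := ht
    refine (hE ▸ htT : t ∈ U ∪ V).resolve_right fun htV ↦ hxY ?_
    exact mem_iUnion₂_of_mem htV ((hT.nonloop t htT).isNonloop.mem_closure_singleton htx)
  have hrX : N.eRk (N.E \ Y) = N.eRk U :=
    le_antisymm (eRk_le_of_subset_closure hXU) (N.eRk_mono hUX)
  have hrY : N.eRk Y = N.eRk V := le_antisymm (eRk_le_of_subset_closure hYV) (N.eRk_mono hVY)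
  have hk2 : (k : ℕ∞) ≤ 2 := by exact_mod_cast (by omega : k ≤ 2)
  refine ⟨k, hk, N.E \ Y, Y, (verticalKSeparation_iff_of_partition disjoint_sdiff_left
    (sdiff_union_of_subset hYE)).2 ⟨by rwa [hrX, hrY], ?_, ?_⟩⟩
  · exact hrX ▸ hT.le_eRk_of_le_two hUT hk2 hUk
  · exact hrY ▸ hT.le_eRk_of_le_two hVT hk2 hVk

lemma siConn3_iff_forall_not_verticalKSeparation [N.RankFinite] :
    SiConn3 N ↔ ∀ k < 3, ∀ X Y, ¬ VerticalKSeparation N k X Y := by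
  refine ⟨fun h k hk X Y hXY ↦ ?_, fun h S hS ↦ ?_⟩
  · obtain ⟨S, hS⟩ := exists_isSimplificationOf N
    exact hS.not_threeConnected_of_verticalKSeparation hk hXY (h S hS)
  · by_contra hS3
    obtain ⟨k, hk, X, Y, hXY⟩ := hS.exists_verticalKSeparation hS3
    exact h k hk X Y hXY

lemma ThreeConnected.isNonloop (hM : ThreeConnected M) (he : e ∈ M.E)
    (hne : (M.E \ {e}).Nonempty) : M.IsNonloop e := by
  by_contra hnl
  refine hM 1 {e} (M.E \ {e}) (by norm_num) ⟨disjoint_sdiff_right,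
    union_sdiff_cancel (singleton_subset_iff.2 he), ?_, by simp, by simpa using hne⟩
  rw [kSeparating_iff, ((not_isNonloop_iff he).1 hnl).eRk_eq, zero_add, Nat.cast_one]
  gcongr
  exact M.eRk_le_eRank _

lemma _root_.Matroid.IsNonloop.eRk_contract_add_one (he : M.IsNonloop e) (hX : X ⊆ M.E \ {e}) :
    (M ／ {e}).eRk X + 1 = M.eRk (insert e X) := by
  obtain ⟨I, hI⟩ := (M ／ {e}).exists_isBasis X hX
  have hIe := he.indep.union_isBasis_union_of_contract_isBasis hI
  rw [union_singleton, union_singleton] at hIe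
  rw [← hI.encard_eq_eRk, ← hIe.encard_eq_eRk,
    encard_insert_of_notMem fun h ↦ (hX (hI.subset h)).2 rfl]

lemma _root_.Matroid.IsNonloop.eRank_contract_add_one (he : M.IsNonloop e) :
    (M ／ {e}).eRank + 1 = M.eRank := by
  rw [← eRk_ground, contract_ground, he.eRk_contract_add_one subset_rfl, insert_sdiff_singleton,
    insert_eq_of_mem he.mem_ground, eRk_ground]

lemma _root_.Matroid.IsNonloop.eRk_eq_eRk_contract_add_one (he : M.IsNonloop e)
    (hX : X ⊆ M.E \ {e}) (heX : e ∈ M.closure X) : M.eRk X = (M ／ {e}).eRk X + 1 := by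
  rw [he.eRk_contract_add_one hX, ← M.eRk_closure_eq (insert e X),
    closure_insert_eq_of_mem_closure heX, eRk_closure_eq]

lemma ThreeConnected.mem_closure_of_verticalKSeparation_contract (hM : ThreeConnected M)
    (he : M.IsNonloop e) (hk : k < 3) (h : VerticalKSeparation (M ／ {e}) k X Y) :
    e ∈ M.closure X := by
  obtain ⟨⟨hXY, hE, hsep, hkX, hkY⟩, -⟩ := h
  rw [kSeparating_iff_of_partition hXY hE] at hsep
  rw [contract_ground] at hE
  have hXe : X ⊆ M.E \ {e} := hE ▸ subset_union_left
  have hYe : Y ⊆ M.E \ {e} := hE ▸ subset_union_right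
  by_contra hecl
  -- otherwise contracting `e` does not lower the rank of `X`, and `(X, Y ∪ e)` is a
  -- `k`-separation of `M`
  have hrX : M.eRk X + 1 = (M ／ {e}).eRk X + 1 := by
    rw [← eRk_insert_eq_add_one ⟨he.mem_ground, hecl⟩, he.eRk_contract_add_one hXe]
  have hXY' : Disjoint X (insert e Y) := disjoint_insert_right.2 ⟨fun h ↦ (hXe h).2 rfl, hXY⟩
  have hE' : X ∪ insert e Y = M.E := by
    rw [union_insert, hE, insert_sdiff_singleton, insert_eq_of_mem he.mem_ground]
  refine hM k X (insert e Y) hk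
    ⟨hXY', hE', ?_, hkX, hkY.trans (encard_le_encard (subset_insert e Y))⟩
  rw [kSeparating_iff_of_partition hXY' hE', ← he.eRk_contract_add_one hYe,
    ← he.eRank_contract_add_one]
  calc M.eRk X + ((M ／ {e}).eRk Y + 1) + 1 = (M.eRk X + 1) + (M ／ {e}).eRk Y + 1 := by ring
    _ = ((M ／ {e}).eRk X + (M ／ {e}).eRk Y + 1) + 1 := by rw [hrX]; ring
    _ ≤ ((M ／ {e}).eRank + k) + 1 := by gcongr
    _ = (M ／ {e}).eRank + 1 + k := by ring

lemma verticalKSeparation_contract_iff (he : M.IsNonloop e) (hXY : Disjoint X Y)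
    (hE : X ∪ Y = M.E \ {e}) (hY : e ∈ M.closure Y) :
    VerticalKSeparation (M ／ {e}) k X Y ↔ VerticalKSeparation M (k + 1) (X ∪ {e}) Y := by
  have hXe : X ⊆ M.E \ {e} := hE ▸ subset_union_left
  have hYe : Y ⊆ M.E \ {e} := hE ▸ subset_union_right
  have hXY' : Disjoint (X ∪ {e}) Y :=
    disjoint_union_left.2 ⟨hXY, disjoint_singleton_left.2 fun h ↦ (hYe h).2 rfl⟩
  have hE' : X ∪ {e} ∪ Y = M.E := by
    rw [union_right_comm, hE, sdiff_union_of_subset (singleton_subset_iff.2 he.mem_ground)]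
  rw [verticalKSeparation_iff_of_partition hXY (by rwa [contract_ground]),
    verticalKSeparation_iff_of_partition hXY' hE', union_singleton,
    ← he.eRk_contract_add_one hXe, he.eRk_eq_eRk_contract_add_one hYe hY,
    ← he.eRank_contract_add_one]
  have h1 : (1 : ℕ∞) ≠ ⊤ := ENat.one_ne_top
  have h2 : (2 : ℕ∞) ≠ ⊤ := ENat.ofNat_ne_top 2
  set a := (M ／ {e}).eRk X
  set b := (M ／ {e}).eRk Y
  set r := (M ／ {e}).eRank
  rw [show a + 1 + (b + 1) + 1 = a + b + 1 + 2 by ring, Nat.cast_add, Nat.cast_one,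
    show r + 1 + (k + 1) = r + k + 2 by ring, ENat.add_le_add_iff_right h2,
    ENat.add_le_add_iff_right h1, ENat.add_le_add_iff_right h1]

lemma vertical3Sep_iff (he : M.IsNonloop e) :
    Vertical3Sep M X e Y ↔
      e ∈ M.closure X ∧ e ∈ M.closure Y ∧ VerticalKSeparation (M ／ {e}) 2 X Y := by
  constructor
  · rintro ⟨heX, heY, hXY, hE, h, -, hX, hY⟩
    have hE' : X ∪ Y = M.E \ {e} := by
      rw [← hE, union_right_comm, union_sdiff_right, sdiff_singleton_eq_self]
      simp [heX, heY]
    exact ⟨hX, hY, (verticalKSeparation_contract_iff he hXY hE' hY).2 h⟩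
  · rintro ⟨hX, hY, h⟩
    have hXY : Disjoint X Y := h.1.1
    have hE : X ∪ Y = M.E \ {e} := h.1.2.1
    have heXY : e ∉ X ∪ Y := by simp [hE]
    refine ⟨fun h ↦ heXY (.inl h), fun h ↦ heXY (.inr h), hXY, ?_,
      (verticalKSeparation_contract_iff he hXY hE hY).1 h,
      ((verticalKSeparation_contract_iff he hXY.symm (union_comm X Y ▸ hE) hX).1 h.symm).symm,
      hX, hY⟩
    rw [union_right_comm, hE, sdiff_union_of_subset (singleton_subset_iff.2 he.mem_ground)]

lemma ThreeConnected.not_siConn3_contract_iff [M.RankFinite] (hM : ThreeConnected M)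
    (he : e ∈ M.E) : ¬ SiConn3 (M ／ {e}) ↔ ∃ X Y, Vertical3Sep M X e Y := by
  simp only [siConn3_iff_forall_not_verticalKSeparation, not_forall, not_not]
  constructor
  · rintro ⟨k, hk, X, Y, h⟩
    obtain ⟨⟨hXY, hE, -⟩, -⟩ := id h
    rw [contract_ground] at hE
    have hne : M.IsNonloop e :=
      hM.isNonloop he (h.1.nonempty_left.mono (hE ▸ subset_union_left))
    have hX := hM.mem_closure_of_verticalKSeparation_contract hne hk h
    have hY := hM.mem_closure_of_verticalKSeparation_contract hne hk h.symm
    obtain rfl : k = 2 := by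
      by_contra hk2
      exact hM (k + 1) _ _ (by omega) ((verticalKSeparation_contract_iff hne hXY hE hY).1 h).1
    exact ⟨X, Y, (vertical3Sep_iff hne).2 ⟨hX, hY, h⟩⟩
  · rintro ⟨X, Y, hV⟩
    obtain ⟨-, heY, -, hE, ⟨hsep, -⟩, -⟩ := id hV
    have hY : Y ⊆ M.E \ {e} := subset_sdiff_singleton (hE ▸ subset_union_right) heY
    have hne : M.IsNonloop e := hM.isNonloop he (hsep.symm.nonempty_left.mono hY)
    exact ⟨2, by norm_num, X, Y, ((vertical3Sep_iff hne).1 hV).2.2⟩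

/-- Lemma 2.5. -/
theorem statement_17 {α : Type*} (M : Matroid α) [M.Finite]
    (hM : ThreeConnected M) (e : α) (he : e ∈ M.E) :
    (¬ SiConn3 (con M {e}) ↔ ∃ X Y, Vertical3Sep M X e Y) ∧
    (¬ CoConn3 (del M {e}) ↔ ∃ X Y, Cyclic3Sep M X e Y) := by
  refine ⟨hM.not_siConn3_contract_iff he, ?_⟩
  rw [del_eq_delete, coConn3_iff_siConn3_dual, dual_delete]
  exact (threeConnected_dual_iff.2 hM).not_siConn3_contract_iff he

end ElasticPaper
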